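/- Pasting property of the word measure: for all words δ₀, γ₁, τ₁, δ₁, γ₂, τ₂, δ₂ over P, if |δ₀τ₁| ≼′ |δ₀| + |γ₁|, |γ₁δ₁| ≼′ |δ₀| + |γ₁|, |δ₁τ₂| ≼′ |δ₁| + |γ₂|, and |γ₂δ₂| ≼′ |δ₁| + |γ₂|, then |δ₀τ₁τ₂| ≼′ |δ₀| + |γ₁γ₂| and |γ₁γ₂δ₂| ≼′ |δ₀| + |γ₁γ₂|, where juxtaposition of words denotes concatenation. -/

import Mathlib

/-- The measure of a word over `P` with respect to a strict order `lt` on `P`,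
valued in finitely supported multisets `P →₀ ℕ`: `|ε| = 0` and
`|I σ| = δ_I + |σ^(I)|`, where `σ^(I)` is `σ` with every letter `lt`-below `I`
removed. -/
noncomputable def wordMeas {P : Type*} (lt : P → P → Prop) : List P → (P →₀ ℕ)
  | [] => 0
  | I :: σ =>
      Finsupp.single I 1 +
        wordMeas lt (σ.filter fun J => @decide (¬ lt J I) (Classical.propDecidable _))
termination_by l => l.length
decreasing_by
  simp only [List.length_cons]
  simp only [List.length_unattach]
  exact Nat.lt_succ_of_le ((List.length_filter_le _ σ.attach).trans (by simp))

/-- The Dershowitz–Manna-style strict order on finitely supported multisets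
`P →₀ ℕ` induced by a strict order `lt` on `P`. -/
def DMLt {P : Type*} (lt : P → P → Prop) (M N : P →₀ ℕ) : Prop :=
  ∃ X Y Z : P →₀ ℕ, M = Z + X ∧ N = Z + Y ∧ Y ≠ 0 ∧
    ∀ I : P, X I ≠ 0 → ∃ J : P, Y J ≠ 0 ∧ lt I J

/-- The reflexive closure `≼′` of the Dershowitz–Manna-style order. -/
def DMLe {P : Type*} (lt : P → P → Prop) (M N : P →₀ ℕ) : Prop :=
  DMLt lt M N ∨ M = N

/-!
Everything goes through the Huet–Oppen form of `≼′`: `M ≼′ N` iff every point where `M`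
exceeds `N` lies strictly below a point where `N` exceeds `M`. In this form the order is
transitive, cancellative, translation invariant, and preserved by erasing the mass lying below
a fixed multiset; and the measure satisfies `|στ| = |σ| + |τ|^{(σ)}`.

The second bound then just chains the bounds on `δ₂` and on `δ₁`. For the first, the mass of
`|τ₂|^{(δ₀τ₁)}` lying below `|γ₁δ₁|` lies below the support of `|δ₀| + |γ₁|` but not below
`|δ₀τ₁|`, so it can be added to the left side of the first bound for free; the rest is bounded
by `|γ₂|^{(γ₁)}` through the third.
-/

section HuetOppen

variable {P : Type*} {lt : P → P → Prop}

theorem Set.Finite.exists_maximal_rel (lt : P → P → Prop) [IsStrictOrder P lt] {s : Set P}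
    (hs : s.Finite) (hne : s.Nonempty) : ∃ J ∈ s, ∀ J' ∈ s, ¬ lt J J' := by
  have : IsStrictOrder P (flip lt) :=
    { irrefl := irrefl_of lt, trans := fun _ _ _ hab hbc => trans_of lt hbc hab }
  obtain ⟨⟨J, hJ⟩, -, hmax⟩ :=
    (hs.wellFoundedOn (r := flip lt)).has_min Set.univ ⟨⟨_, hne.some_mem⟩, trivial⟩
  exact ⟨J, hJ, fun J' hJ' => hmax ⟨J', hJ'⟩ trivial⟩

def IsBelow (lt : P → P → Prop) (M : P →₀ ℕ) (K : P) : Prop :=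
  ∃ J, M J ≠ 0 ∧ lt K J

theorem IsBelow.of_lt [IsTrans P lt] {μ : P →₀ ℕ} {K J : P} (hJ : IsBelow lt μ J)
    (hKJ : lt K J) : IsBelow lt μ K :=
  let ⟨J', hJ', hJJ'⟩ := hJ
  ⟨J', hJ', _root_.trans hKJ hJJ'⟩

theorem isBelow_single {I K : P} : IsBelow lt (Finsupp.single I 1) K ↔ lt K I := by
  classical
  simp [IsBelow, Finsupp.single_apply]

def HuetOppenLe (lt : P → P → Prop) (M N : P →₀ ℕ) : Prop :=
  ∀ I, N I < M I → ∃ J, lt I J ∧ M J < N J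

namespace HuetOppenLe

variable {K M N O : P →₀ ℕ}

theorem refl : HuetOppenLe lt M M :=
  fun _ hI => absurd hI (lt_irrefl _)

theorem of_le (h : M ≤ N) : HuetOppenLe lt M N :=
  fun I hI => absurd (h I) hI.not_ge

theorem add_left_iff : HuetOppenLe lt (K + M) (K + N) ↔ HuetOppenLe lt M N := by
  simp only [HuetOppenLe, Finsupp.add_apply, add_lt_add_iff_left]

theorem add_right (h : HuetOppenLe lt M N) : HuetOppenLe lt (M + K) (N + K) := by
  rwa [add_comm M, add_comm N, add_left_iff]

theorem trans [IsStrictOrder P lt] (h₁ : HuetOppenLe lt M N) (h₂ : HuetOppenLe lt N O) :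
    HuetOppenLe lt M O := by
  classical
  intro I hI
  set s := {J | lt I J ∧ (M J < N J ∨ N J < O J)}
  have hs : s.Finite := (N.support ∪ O.support).finite_toSet.subset fun J ⟨_, hJ⟩ => by
    simp only [Finset.coe_union, Set.mem_union, Finset.mem_coe, Finsupp.mem_support_iff]
    omega
  have hne : s.Nonempty := by
    rcases lt_or_ge (N I) (M I) with h | h
    · obtain ⟨J, hIJ, hJ⟩ := h₁ I h
      exact ⟨J, hIJ, .inl hJ⟩
    · obtain ⟨J, hIJ, hJ⟩ := h₂ I (by omega)
      exact ⟨J, hIJ, .inr hJ⟩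
  obtain ⟨J, ⟨hIJ, hJ⟩, hmax⟩ := hs.exists_maximal_rel lt hne
  refine ⟨J, hIJ, ?_⟩
  by_contra! hOM
  rcases hJ with hJ | hJ
  · obtain ⟨J', hJJ', hJ'⟩ := h₂ J (by omega)
    exact hmax J' ⟨_root_.trans hIJ hJJ', .inr hJ'⟩ hJJ'
  · obtain ⟨J', hJJ', hJ'⟩ := h₁ J (by omega)
    exact hmax J' ⟨_root_.trans hIJ hJJ', .inl hJ'⟩ hJJ'

theorem isBelow [IsTrans P lt] (h : HuetOppenLe lt M N) {K : P} (hK : IsBelow lt M K) :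
    IsBelow lt N K := by
  obtain ⟨J, hJ, hKJ⟩ := hK
  by_cases hNJ : N J = 0
  · obtain ⟨J', hJJ', hJ'⟩ := h J (by omega)
    exact ⟨J', by omega, _root_.trans hKJ hJJ'⟩
  · exact ⟨J, hNJ, hKJ⟩

theorem filter {p : P → Prop} [DecidablePred p] (hp : ∀ K J, lt K J → p K → p J)
    (h : HuetOppenLe lt M N) : HuetOppenLe lt (M.filter p) (N.filter p) := by
  intro I hI
  by_cases hpI : p I
  · rw [Finsupp.filter_apply_pos _ _ hpI, Finsupp.filter_apply_pos _ _ hpI] at hI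
    obtain ⟨J, hIJ, hJ⟩ := h I hI
    have hpJ := hp I J hIJ hpI
    exact ⟨J, hIJ, by rwa [Finsupp.filter_apply_pos _ _ hpJ, Finsupp.filter_apply_pos _ _ hpJ]⟩
  · simp [Finsupp.filter_apply_neg _ _ hpI] at hI

theorem add_of_isBelow [IsStrictOrder P lt] {A W E : P →₀ ℕ} (h : HuetOppenLe lt A W)
    (hE : ∀ K, E K ≠ 0 → IsBelow lt W K ∧ ¬ IsBelow lt A K) : HuetOppenLe lt (A + E) W := by
  intro I hI
  rw [Finsupp.add_apply] at hI
  set s := {J | lt I J ∧ A J < W J}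
  have hs : s.Finite := W.support.finite_toSet.subset fun J hJ =>
    Finsupp.mem_support_iff.2 (Nat.ne_zero_of_lt hJ.2)
  have hne : s.Nonempty := by
    by_cases hEI : E I = 0
    · obtain ⟨J, hIJ, hJ⟩ := h I (by omega)
      exact ⟨J, hIJ, hJ⟩
    · obtain ⟨⟨J, hWJ, hIJ⟩, hA⟩ := hE I hEI
      have hAJ : A J = 0 := by_contra fun hAJ => hA ⟨J, hAJ, hIJ⟩
      exact ⟨J, hIJ, by omega⟩
  obtain ⟨J, ⟨hIJ, hJ⟩, hmax⟩ := hs.exists_maximal_rel lt hne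
  have hEJ : E J = 0 := by
    by_contra hEJ
    obtain ⟨⟨J', hWJ', hJJ'⟩, hA⟩ := hE J hEJ
    have hAJ' : A J' = 0 := by_contra fun hAJ' => hA ⟨J', hAJ', hJJ'⟩
    exact hmax J' ⟨_root_.trans hIJ hJJ', by omega⟩ hJJ'
  exact ⟨J, hIJ, by rw [Finsupp.add_apply]; omega⟩

end HuetOppenLe

theorem DMLt.huetOppenLe [IsStrictOrder P lt] {M N : P →₀ ℕ} (h : DMLt lt M N) :
    HuetOppenLe lt M N := by
  obtain ⟨X, Y, Z, rfl, rfl, -, hXY⟩ := h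
  intro I hI
  simp only [Finsupp.add_apply, add_lt_add_iff_left] at hI
  obtain ⟨J₀, hJ₀, hIJ₀⟩ := hXY I (by omega)
  have hs : {J | Y J ≠ 0 ∧ lt I J}.Finite :=
    Y.support.finite_toSet.subset fun J hJ => Finsupp.mem_support_iff.2 hJ.1
  obtain ⟨J, ⟨hJ, hIJ⟩, hmax⟩ := hs.exists_maximal_rel lt ⟨J₀, hJ₀, hIJ₀⟩
  have hXJ : X J = 0 := by
    by_contra hXJ
    obtain ⟨J', hJ', hJJ'⟩ := hXY J hXJ
    exact hmax J' ⟨hJ', _root_.trans hIJ hJJ'⟩ hJJ'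
  exact ⟨J, hIJ, by simp only [Finsupp.add_apply, add_lt_add_iff_left]; omega⟩

theorem HuetOppenLe.dmLe {M N : P →₀ ℕ} (h : HuetOppenLe lt M N) : DMLe lt M N := by
  by_cases hMN : M = N
  · exact Or.inr hMN
  refine Or.inl ⟨M - N, N - M, M ⊓ N, ?_, ?_, ?_, ?_⟩
  · ext K; simp only [Finsupp.add_apply, Finsupp.tsub_apply, Finsupp.inf_apply]; omega
  · ext K; simp only [Finsupp.add_apply, Finsupp.tsub_apply, Finsupp.inf_apply]; omega
  · intro hNM
    have hle : N ≤ M := tsub_eq_zero_iff_le.1 hNM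
    obtain ⟨I, hI⟩ : ∃ I, N I < M I := by
      by_contra! hMle
      exact hMN (le_antisymm hMle hle)
    obtain ⟨J, -, hJ⟩ := h I hI
    exact (hle J).not_gt hJ
  · intro I hI
    rw [Finsupp.tsub_apply] at hI
    obtain ⟨J, hIJ, hJ⟩ := h I (by omega)
    exact ⟨J, by rw [Finsupp.tsub_apply]; omega, hIJ⟩

theorem dmLe_iff_huetOppenLe [IsStrictOrder P lt] {M N : P →₀ ℕ} :
    DMLe lt M N ↔ HuetOppenLe lt M N :=
  ⟨fun h => h.elim DMLt.huetOppenLe fun h => h ▸ .refl, HuetOppenLe.dmLe⟩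

end HuetOppen

section WordMeasure

open scoped Classical

variable {P : Type*} {lt : P → P → Prop}

/-- `eraseBelow lt (wordMeas lt σ) ν` is the paper's `ν^{(σ)}`. -/
noncomputable def eraseBelow (lt : P → P → Prop) (μ ν : P →₀ ℕ) : P →₀ ℕ :=
  ν.filter fun K => ¬ IsBelow lt μ K

variable {μ ν ρ : P →₀ ℕ} {K : P}

theorem eraseBelow_apply_of_isBelow (h : IsBelow lt μ K) : eraseBelow lt μ ν K = 0 :=
  Finsupp.filter_apply_neg _ _ (not_not_intro h)

theorem eraseBelow_apply_of_not_isBelow (h : ¬ IsBelow lt μ K) : eraseBelow lt μ ν K = ν K :=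
  Finsupp.filter_apply_pos _ _ h

theorem not_isBelow_of_eraseBelow_ne_zero (h : eraseBelow lt μ ν K ≠ 0) : ¬ IsBelow lt μ K :=
  fun hK => h (eraseBelow_apply_of_isBelow hK)

theorem eraseBelow_le : eraseBelow lt μ ν ≤ ν := by
  intro K
  by_cases hK : IsBelow lt μ K
  · simp [eraseBelow_apply_of_isBelow hK]
  · rw [eraseBelow_apply_of_not_isBelow hK]

theorem eraseBelow_add : eraseBelow lt μ (ν + ρ) = eraseBelow lt μ ν + eraseBelow lt μ ρ :=
  Finsupp.filter_add

theorem eraseBelow_single_of_isBelow {J : P} {n : ℕ} (h : IsBelow lt μ J) :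
    eraseBelow lt μ (Finsupp.single J n) = 0 :=
  Finsupp.filter_single_of_neg _ (not_not_intro h)

theorem eraseBelow_single_of_not_isBelow {J : P} {n : ℕ} (h : ¬ IsBelow lt μ J) :
    eraseBelow lt μ (Finsupp.single J n) = Finsupp.single J n :=
  Finsupp.filter_single_of_pos _ h

theorem HuetOppenLe.eraseBelow [IsTrans P lt] {M N : P →₀ ℕ} (h : HuetOppenLe lt M N) :
    HuetOppenLe lt (eraseBelow lt μ M) (eraseBelow lt μ N) :=
  h.filter fun _ _ hKJ hK hJ => hK (hJ.of_lt hKJ)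

theorem isBelow_add_eraseBelow [IsTrans P lt] :
    IsBelow lt (μ + eraseBelow lt μ ν) K ↔ IsBelow lt μ K ∨ IsBelow lt ν K := by
  constructor
  · rintro ⟨J, hJ, hKJ⟩
    by_cases hμJ : μ J = 0
    · rw [Finsupp.add_apply, hμJ, zero_add] at hJ
      exact .inr ⟨J, ((Nat.pos_of_ne_zero hJ).trans_le (eraseBelow_le J)).ne', hKJ⟩
    · exact .inl ⟨J, hμJ, hKJ⟩
  · rintro (⟨J, hJ, hKJ⟩ | ⟨J, hJ, hKJ⟩)
    · exact ⟨J, by rw [Finsupp.add_apply]; omega, hKJ⟩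
    · by_cases hμJ : IsBelow lt μ J
      · exact (hμJ.of_lt hKJ).elim fun J' h => ⟨J', by rw [Finsupp.add_apply]; omega, h.2⟩
      · exact ⟨J, by rw [Finsupp.add_apply, eraseBelow_apply_of_not_isBelow hμJ]; omega, hKJ⟩

theorem eraseBelow_add_eraseBelow [IsTrans P lt] :
    eraseBelow lt (μ + eraseBelow lt μ ν) ρ = eraseBelow lt μ (eraseBelow lt ν ρ) := by
  ext K
  by_cases hμ : IsBelow lt μ K
  · rw [eraseBelow_apply_of_isBelow hμ,
      eraseBelow_apply_of_isBelow (isBelow_add_eraseBelow.2 (.inl hμ))]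
  by_cases hν : IsBelow lt ν K
  · rw [eraseBelow_apply_of_not_isBelow hμ, eraseBelow_apply_of_isBelow hν,
      eraseBelow_apply_of_isBelow (isBelow_add_eraseBelow.2 (.inr hν))]
  · rw [eraseBelow_apply_of_not_isBelow hμ, eraseBelow_apply_of_not_isBelow hν,
      eraseBelow_apply_of_not_isBelow (by simp [isBelow_add_eraseBelow, hμ, hν])]

-- The decidability instance is the one in the definition of `wordMeas`.
theorem wordMeas_filter [IsTrans P lt] (I : P) (σ : List P) :
    wordMeas lt (σ.filter fun J => @decide (¬ lt J I) (Classical.propDecidable _)) =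
      eraseBelow lt (Finsupp.single I 1) (wordMeas lt σ) :=
  match σ with
  | [] => by simp [wordMeas, eraseBelow, Finsupp.filter_zero]
  | J :: τ => by
    have ih := wordMeas_filter I (τ.filter fun K => @decide (¬ lt K J) (Classical.propDecidable _))
    rw [List.filter_filter] at ih
    rw [List.filter_cons, wordMeas.eq_2 lt J τ, eraseBelow_add, ← ih]
    by_cases hJI : lt J I
    · rw [eraseBelow_single_of_isBelow (isBelow_single.2 hJI), zero_add]
      simp only [hJI, not_true_eq_false, decide_false, Bool.false_eq_true, if_false]
      congr 1
      refine List.filter_congr fun K _ => ?_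
      by_cases hKI : lt K I
      · simp [hKI]
      · have hKJ : ¬ lt K J := fun hKJ => hKI (_root_.trans hKJ hJI)
        simp [hKI, hKJ]
    · rw [eraseBelow_single_of_not_isBelow (isBelow_single.not.2 hJI)]
      simp only [hJI, not_false_eq_true, decide_true, if_true]
      rw [wordMeas.eq_2, List.filter_filter]
      simp only [Bool.and_comm]
termination_by σ.length
decreasing_by exact Nat.lt_succ_of_le (List.length_filter_le _ _)

theorem wordMeas_cons [IsTrans P lt] (I : P) (σ : List P) :
    wordMeas lt (I :: σ) =
      Finsupp.single I 1 + eraseBelow lt (Finsupp.single I 1) (wordMeas lt σ) := by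
  rw [wordMeas.eq_2, wordMeas_filter]

theorem wordMeas_append [IsTrans P lt] (σ τ : List P) :
    wordMeas lt (σ ++ τ) = wordMeas lt σ + eraseBelow lt (wordMeas lt σ) (wordMeas lt τ) := by
  induction σ with
  | nil => ext K; simp [wordMeas, eraseBelow, IsBelow]
  | cons I σ ih =>
    rw [List.cons_append, wordMeas_cons, ih, eraseBelow_add, wordMeas_cons,
      eraseBelow_add_eraseBelow, add_assoc]

theorem eraseBelow_wordMeas_append [IsTrans P lt] (σ τ : List P) :
    eraseBelow lt (wordMeas lt (σ ++ τ)) ν =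
      eraseBelow lt (wordMeas lt σ) (eraseBelow lt (wordMeas lt τ) ν) := by
  rw [wordMeas_append, eraseBelow_add_eraseBelow]

theorem filter_isBelow_add_eraseBelow (μ ν : P →₀ ℕ) :
    ν.filter (IsBelow lt μ) + eraseBelow lt μ ν = ν :=
  Finsupp.filter_add_filter_not ν _

theorem huetOppenLe_eraseBelow_of_append [IsTrans P lt] {σ τ : List P}
    {ν : P →₀ ℕ} (h : HuetOppenLe lt (wordMeas lt (σ ++ τ)) (wordMeas lt σ + ν)) :
    HuetOppenLe lt (eraseBelow lt (wordMeas lt σ) (wordMeas lt τ)) ν := by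
  rwa [wordMeas_append, HuetOppenLe.add_left_iff] at h

variable [IsStrictOrder P lt] {δ₀ γ₁ τ₁ δ₁ γ₂ τ₂ δ₂ : List P}

theorem huetOppenLe_pasting_left
    (h₁ : HuetOppenLe lt (wordMeas lt (δ₀ ++ τ₁)) (wordMeas lt δ₀ + wordMeas lt γ₁))
    (h₂ : HuetOppenLe lt (wordMeas lt (γ₁ ++ δ₁)) (wordMeas lt δ₀ + wordMeas lt γ₁))
    (h₃ : HuetOppenLe lt (wordMeas lt (δ₁ ++ τ₂)) (wordMeas lt δ₁ + wordMeas lt γ₂)) :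
    HuetOppenLe lt (wordMeas lt (δ₀ ++ τ₁ ++ τ₂))
      (wordMeas lt δ₀ + wordMeas lt (γ₁ ++ γ₂)) := by
  rw [wordMeas_append (δ₀ ++ τ₁), wordMeas_append γ₁, ← add_assoc]
  set E := eraseBelow lt (wordMeas lt (δ₀ ++ τ₁)) (wordMeas lt τ₂)
  have low : HuetOppenLe lt
      (wordMeas lt (δ₀ ++ τ₁) + E.filter (IsBelow lt (wordMeas lt (γ₁ ++ δ₁))))
      (wordMeas lt δ₀ + wordMeas lt γ₁) :=
    h₁.add_of_isBelow fun K hK => by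
      rw [← Finsupp.mem_support_iff, Finsupp.support_filter, Finset.mem_filter,
        Finsupp.mem_support_iff] at hK
      exact ⟨h₂.isBelow hK.2, not_isBelow_of_eraseBelow_ne_zero hK.1⟩
  have high : HuetOppenLe lt (eraseBelow lt (wordMeas lt (γ₁ ++ δ₁)) E)
      (eraseBelow lt (wordMeas lt γ₁) (wordMeas lt γ₂)) := by
    rw [eraseBelow_wordMeas_append]
    exact ((HuetOppenLe.of_le eraseBelow_le).eraseBelow.trans
      (huetOppenLe_eraseBelow_of_append h₃)).eraseBelow
  rw [← filter_isBelow_add_eraseBelow (wordMeas lt (γ₁ ++ δ₁)) E, ← add_assoc]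
  exact low.add_right.trans (HuetOppenLe.add_left_iff.2 high)

theorem huetOppenLe_pasting_right
    (h₂ : HuetOppenLe lt (wordMeas lt (γ₁ ++ δ₁)) (wordMeas lt δ₀ + wordMeas lt γ₁))
    (h₄ : HuetOppenLe lt (wordMeas lt (γ₂ ++ δ₂)) (wordMeas lt δ₁ + wordMeas lt γ₂)) :
    HuetOppenLe lt (wordMeas lt (γ₁ ++ γ₂ ++ δ₂))
      (wordMeas lt δ₀ + wordMeas lt (γ₁ ++ γ₂)) := by
  rw [add_comm] at h₂ h₄
  rw [wordMeas_append (γ₁ ++ γ₂), eraseBelow_wordMeas_append, add_comm (wordMeas lt δ₀),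
    HuetOppenLe.add_left_iff]
  exact (huetOppenLe_eraseBelow_of_append h₄).eraseBelow.trans
    (huetOppenLe_eraseBelow_of_append h₂)

end WordMeasure

theorem wordMeas_pasting_general {P : Type*} (lt : P → P → Prop)
    (hirr : ∀ p : P, ¬ lt p p)
    (htrans : ∀ p q r : P, lt p q → lt q r → lt p r)
    (δ₀ γ₁ τ₁ δ₁ γ₂ τ₂ δ₂ : List P)
    (h₁ : DMLe lt (wordMeas lt (δ₀ ++ τ₁)) (wordMeas lt δ₀ + wordMeas lt γ₁))
    (h₂ : DMLe lt (wordMeas lt (γ₁ ++ δ₁)) (wordMeas lt δ₀ + wordMeas lt γ₁))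
    (h₃ : DMLe lt (wordMeas lt (δ₁ ++ τ₂)) (wordMeas lt δ₁ + wordMeas lt γ₂))
    (h₄ : DMLe lt (wordMeas lt (γ₂ ++ δ₂)) (wordMeas lt δ₁ + wordMeas lt γ₂)) :
    DMLe lt (wordMeas lt (δ₀ ++ τ₁ ++ τ₂)) (wordMeas lt δ₀ + wordMeas lt (γ₁ ++ γ₂)) ∧
    DMLe lt (wordMeas lt (γ₁ ++ γ₂ ++ δ₂)) (wordMeas lt δ₀ + wordMeas lt (γ₁ ++ γ₂)) := by
  have : IsStrictOrder P lt := { irrefl := hirr, trans := htrans }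
  rw [dmLe_iff_huetOppenLe] at h₁ h₂ h₃ h₄
  exact ⟨(huetOppenLe_pasting_left h₁ h₂ h₃).dmLe, (huetOppenLe_pasting_right h₂ h₄).dmLe⟩

/-- Pasting property of the word measure: two vertically stacked confluence diagrams
whose measures are bounded paste to a diagram whose measures are bounded. -/
theorem wordMeas_pasting {P : Type*} (lt : P → P → Prop)
    (hirr : ∀ p : P, ¬ lt p p)
    (htrans : ∀ p q r : P, lt p q → lt q r → lt p r)
    (hwf : WellFounded lt)
    (δ₀ γ₁ τ₁ δ₁ γ₂ τ₂ δ₂ : List P)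
    (h₁ : DMLe lt (wordMeas lt (δ₀ ++ τ₁)) (wordMeas lt δ₀ + wordMeas lt γ₁))
    (h₂ : DMLe lt (wordMeas lt (γ₁ ++ δ₁)) (wordMeas lt δ₀ + wordMeas lt γ₁))
    (h₃ : DMLe lt (wordMeas lt (δ₁ ++ τ₂)) (wordMeas lt δ₁ + wordMeas lt γ₂))
    (h₄ : DMLe lt (wordMeas lt (γ₂ ++ δ₂)) (wordMeas lt δ₁ + wordMeas lt γ₂)) :
    DMLe lt (wordMeas lt (δ₀ ++ τ₁ ++ τ₂)) (wordMeas lt δ₀ + wordMeas lt (γ₁ ++ γ₂)) ∧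
    DMLe lt (wordMeas lt (γ₁ ++ γ₂ ++ δ₂)) (wordMeas lt δ₀ + wordMeas lt (γ₁ ++ γ₂)) :=
  wordMeas_pasting_general lt hirr htrans δ₀ γ₁ τ₁ δ₁ γ₂ τ₂ δ₂ h₁ h₂ h₃ h₄
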